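/- arXiv:2006.04769 — 2 statements merged into one kernel-verified Lean document; each statement's English description precedes it below -/
import Mathlib

section
/- If the columns of X̲ are pairwise orthogonal (features uncorrelated), then for every λ ∈ [0,1), the contribution-covariance-regularized solution ((1−λ)X̲ᵀX̲ + nλV)⁻¹X̲ᵀy̲ equals the OLS solution (X̲ᵀX̲)⁻¹X̲ᵀy̲. -/
/-! Orthogonal columns make the Gram matrix `X̲ᵀX̲` diagonal, so it coincides with `nV`; the
regularized matrix `(1 - λ) X̲ᵀX̲ + λ nV` is then a convex combination of `X̲ᵀX̲` with itself. -/

open Matrix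

theorem Matrix.transpose_mul_self_eq_diagonal_of_orthogonal {m k R : Type*} [Fintype m]
    [DecidableEq k] [NonUnitalNonAssocSemiring R] {A : Matrix m k R}
    (horth : ∀ j j' : k, j ≠ j' → ∑ i, A i j * A i j' = 0) :
    Aᵀ * A = diagonal fun j => (Aᵀ * A) j j := by
  ext j j'
  by_cases h : j = j'
  · subst h; simp
  · simp [diagonal_apply_ne _ h, mul_apply, horth j j' h]

theorem ccp_solution_eq_ols_of_orthogonal_general {n k : ℕ}
    (Xc : Matrix (Fin n) (Fin k) ℝ) (yc : Fin n → ℝ)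
    (horth : ∀ j j' : Fin k, j ≠ j' → ∑ i, Xc i j * Xc i j' = 0)
    (V : Matrix (Fin k) (Fin k) ℝ)
    (hV : (n : ℝ) • V = Matrix.diagonal fun j => (Xcᵀ * Xc) j j) :
    ∀ l : ℝ, 0 ≤ l → l < 1 →
      ((1 - l) • (Xcᵀ * Xc) + ((n : ℝ) * l) • V)⁻¹.mulVec (Xcᵀ.mulVec yc) =
        (Xcᵀ * Xc)⁻¹.mulVec (Xcᵀ.mulVec yc) := by
  intro l _ _
  have hgram : Xcᵀ * Xc = diagonal fun j => (Xcᵀ * Xc) j j :=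
    transpose_mul_self_eq_diagonal_of_orthogonal horth
  have hreg : (1 - l) • (Xcᵀ * Xc) + ((n : ℝ) * l) • V = Xcᵀ * Xc := by
    rw [mul_comm, ← smul_smul, hV, ← hgram, ← add_smul, sub_add_cancel, one_smul]
  rw [hreg]

/-- If the columns of `X̲` are pairwise orthogonal (features uncorrelated),
then for every `λ ∈ [0,1)` the contribution-covariance-regularized solution
`((1−λ)X̲ᵀX̲ + nλV)⁻¹X̲ᵀy̲` equals the OLS solution `(X̲ᵀX̲)⁻¹X̲ᵀy̲`. -/
theorem ccp_solution_eq_ols_of_orthogonal {n k : ℕ}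
    (Xc : Matrix (Fin n) (Fin k) ℝ) (yc : Fin n → ℝ)
    (hcols : ∀ j, (fun i => Xc i j) ≠ 0)
    (horth : ∀ j j' : Fin k, j ≠ j' → ∑ i, Xc i j * Xc i j' = 0)
    (V : Matrix (Fin k) (Fin k) ℝ)
    (hV : (n : ℝ) • V = Matrix.diagonal fun j => (Xcᵀ * Xc) j j) :
    ∀ l : ℝ, 0 ≤ l → l < 1 →
      ((1 - l) • (Xcᵀ * Xc) + ((n : ℝ) * l) • V)⁻¹.mulVec (Xcᵀ.mulVec yc) =
        (Xcᵀ * Xc)⁻¹.mulVec (Xcᵀ.mulVec yc) :=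
  ccp_solution_eq_ols_of_orthogonal_general Xc yc horth V hV
end

section
/- The ridge-type solution β̂ = (XᵀX + c·D)⁻¹Xᵀy with D positive definite diagonal and c > 0 is the unique minimizer of |y − Xβ|² + c·βᵀDβ; with Dⱼⱼ = vⱼ + μⱼ² and c = λ/(1−λ) this is the Modified L2 penalized solution corresponding to inverted input dropout. -/
/-!
Expanding the squares writes the objective as `βᵀAβ - 2βᵀXᵀy + yᵀy` with
`A = XᵀX + cD`, which is positive definite because `XᵀX` is positive semidefinite and `cD`
is positive definite. Since `β̂` solves the normal equations `Aβ̂ = Xᵀy`, completing the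
square gives `J β - J β̂ = (β - β̂)ᵀA(β - β̂)`, which is nonnegative and vanishes only at `β = β̂`.
-/

open Matrix Finset

namespace Matrix

variable {n R : Type*} [Fintype n]

section CommRing

variable [CommRing R]

theorem IsSymm.dotProduct_mulVec_comm {A : Matrix n n R} (hA : A.IsSymm) (u v : n → R) :
    u ⬝ᵥ A *ᵥ v = v ⬝ᵥ A *ᵥ u := by
  rw [dotProduct_mulVec, ← mulVec_transpose, hA.eq, dotProduct_comm]

theorem IsSymm.quadratic_sub_eq_of_mulVec_eq {A : Matrix n n R} (hA : A.IsSymm)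
    {t x₀ : n → R} (h : A *ᵥ x₀ = t) (x : n → R) :
    (x ⬝ᵥ A *ᵥ x - 2 * (x ⬝ᵥ t)) - (x₀ ⬝ᵥ A *ᵥ x₀ - 2 * (x₀ ⬝ᵥ t)) =
      (x - x₀) ⬝ᵥ A *ᵥ (x - x₀) := by
  rw [mulVec_sub, sub_dotProduct, dotProduct_sub, dotProduct_sub,
    hA.dotProduct_mulVec_comm x₀ x, h]
  ring

end CommRing

section Ordered

variable [CommRing R] [PartialOrder R] [IsOrderedRing R] [StarRing R] [TrivialStar R]

theorem PosDef.quadratic_le_and_eq_of_mulVec_eq {A : Matrix n n R} (hA : A.PosDef)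
    {t x₀ : n → R} (h : A *ᵥ x₀ = t) (x : n → R) :
    x₀ ⬝ᵥ A *ᵥ x₀ - 2 * (x₀ ⬝ᵥ t) ≤ x ⬝ᵥ A *ᵥ x - 2 * (x ⬝ᵥ t) ∧
      (x ⬝ᵥ A *ᵥ x - 2 * (x ⬝ᵥ t) = x₀ ⬝ᵥ A *ᵥ x₀ - 2 * (x₀ ⬝ᵥ t) → x = x₀) := by
  have hsymm : A.IsSymm := by simpa [IsHermitian, IsSymm] using hA.isHermitian
  have hsq := hsymm.quadratic_sub_eq_of_mulVec_eq h x
  refine ⟨sub_nonneg.mp ?_, fun heq => ?_⟩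
  · simpa [hsq] using hA.posSemidef.dotProduct_mulVec_nonneg (x - x₀)
  · by_contra hne
    have hpos := hA.dotProduct_mulVec_pos (sub_ne_zero_of_ne hne)
    rw [star_trivial, ← hsq, heq, sub_self] at hpos
    exact hpos.false

end Ordered

end Matrix

variable {m n : Type*} [Fintype m] [Fintype n] [DecidableEq n]

theorem Matrix.PosDef.transpose_mul_self_add_smul_diagonal (X : Matrix m n ℝ) {d : n → ℝ}
    (hd : ∀ j, 0 < d j) {c : ℝ} (hc : 0 < c) : (Xᵀ * X + c • diagonal d).PosDef := by
  refine PosDef.posSemidef_add (by simpa using posSemidef_conjTranspose_mul_self X) ?_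
  rw [← diagonal_smul]
  exact posDef_diagonal_iff.mpr fun j => smul_pos hc (hd j)

theorem ridge_objective_eq_quadratic (X : Matrix m n ℝ) (y : m → ℝ) (d : n → ℝ) (c : ℝ)
    (β : n → ℝ) :
    (∑ i, (y i - (X *ᵥ β) i) ^ 2) + c * ∑ j, d j * β j ^ 2 =
      β ⬝ᵥ (Xᵀ * X + c • diagonal d) *ᵥ β - 2 * (β ⬝ᵥ Xᵀ *ᵥ y) + y ⬝ᵥ y := by
  have hfit : ∑ i, (y i - (X *ᵥ β) i) ^ 2 =
      (X *ᵥ β) ⬝ᵥ (X *ᵥ β) - 2 * ((X *ᵥ β) ⬝ᵥ y) + y ⬝ᵥ y := by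
    simp only [dotProduct, mul_sum, ← sum_sub_distrib, ← sum_add_distrib]
    exact sum_congr rfl fun i _ => by ring
  have hpen : c * ∑ j, d j * β j ^ 2 = β ⬝ᵥ (c • diagonal d) *ᵥ β := by
    simp only [dotProduct, ← diagonal_smul, mulVec_diagonal, mul_sum, Pi.smul_apply, smul_eq_mul]
    exact sum_congr rfl fun j _ => by ring
  rw [hfit, hpen, add_mulVec, dotProduct_add, ← mulVec_mulVec, dotProduct_mulVec β Xᵀ,
    vecMul_transpose, dotProduct_mulVec β Xᵀ, vecMul_transpose, dotProduct_comm y]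
  ring

/-- The ridge-type solution `β̂ = (XᵀX + c·D)⁻¹Xᵀy` with `D` positive
definite diagonal and `c > 0` is the unique minimizer of `|y − Xβ|² + c·βᵀDβ`.
With `Dⱼⱼ = vⱼ + μⱼ²` and `c = λ/(1−λ)` this is the Modified L2 penalized solution
corresponding to inverted input dropout. -/
theorem ridge_unique_minimizer {n k : ℕ} (X : Matrix (Fin n) (Fin k) ℝ)
    (y : Fin n → ℝ) (d : Fin k → ℝ) (hd : ∀ j, 0 < d j) (c : ℝ) (hc : 0 < c)
    (J : (Fin k → ℝ) → ℝ)
    (hJ : J = fun β => (∑ i, (y i - X.mulVec β i) ^ 2) + c * ∑ j, d j * (β j) ^ 2)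
    (βhat : Fin k → ℝ)
    (hβhat : βhat = (Xᵀ * X + c • Matrix.diagonal d)⁻¹.mulVec (Xᵀ.mulVec y)) :
    ∀ β : Fin k → ℝ, J βhat ≤ J β ∧ (J β = J βhat → β = βhat) := by
  intro β
  have hA := PosDef.transpose_mul_self_add_smul_diagonal X hd hc
  have hnormal : (Xᵀ * X + c • diagonal d) *ᵥ βhat = Xᵀ *ᵥ y := by
    rw [hβhat, mulVec_mulVec, mul_nonsing_inv _ (isUnit_iff_ne_zero.mpr hA.det_pos.ne'),
      one_mulVec]
  simp only [hJ, ridge_objective_eq_quadratic, add_le_add_iff_right, add_left_inj]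
  exact hA.quadratic_le_and_eq_of_mulVec_eq hnormal β
end
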